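/- Let z ↦ u(z) = σ(Wz + b) be one MLP layer (σ C², applied elementwise), and let g_j ∈ ℝ^r denote given vectors for j = 1,…,n with the property that L∇u_i = ∑_j σ'((Wz+b)_i) W_{ij} g_j =: h_i. Then for each output index i, ∑_{j,l} (∂²u_i/∂z_j∂z_l) g_jᵀ D g_l = (σ''((Wz+b)_i)/σ'((Wz+b)_i)²) · h_iᵀ D h_i, provided σ'((Wz+b)_i) ≠ 0. -/

import Mathlib

/-! The layer output `u_i` depends on `z` only through the scalar `s = W i ⬝ᵥ z + b i`, so its
Hessian is the rank-one matrix `σ''(s) W_iᵀ W_i`. Summing it against `g_jᵀ D g_l` therefore gives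
`σ''(s) · vᵀ D v` with `v = ∑ j, W i j • g j`, and `h_i = σ'(s) • v` turns this into the
right-hand side. -/

open Matrix

/-- Partial derivative in the j-th coordinate direction. -/
noncomputable def pd {n : ℕ} (j : Fin n) (f : (Fin n → ℝ) → ℝ) : (Fin n → ℝ) → ℝ :=
  fun z => fderiv ℝ f z (Pi.single j 1)

theorem dotProduct_mulVec_sum_smul {ι m α : Type*} [Fintype ι] [Fintype m] [CommSemiring α]
    (M : Matrix m m α) (x : ι → α) (v : ι → m → α) :
    (∑ j, x j • v j) ⬝ᵥ M *ᵥ ∑ l, x l • v l = ∑ j, ∑ l, x j * x l * (v j ⬝ᵥ M *ᵥ v l) := by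
  rw [mulVec_sum, sum_dotProduct]
  refine Finset.sum_congr rfl fun j _ => ?_
  rw [smul_dotProduct, dotProduct_sum, smul_eq_mul, Finset.mul_sum]
  refine Finset.sum_congr rfl fun l _ => ?_
  rw [mulVec_smul, dotProduct_smul, smul_eq_mul]
  ring

theorem pd_comp_dotProduct_add {n : ℕ} {f : ℝ → ℝ} (w : Fin n → ℝ) (c : ℝ) (j : Fin n)
    (z : Fin n → ℝ) (hf : DifferentiableAt ℝ f (w ⬝ᵥ z + c)) :
    pd j (fun z' => f (w ⬝ᵥ z' + c)) z = deriv f (w ⬝ᵥ z + c) * w j := by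
  have hL : HasFDerivAt (fun z' => w ⬝ᵥ z' + c)
      (LinearMap.toContinuousLinearMap (dotProductEquiv ℝ (Fin n) w)) z :=
    (LinearMap.toContinuousLinearMap (dotProductEquiv ℝ (Fin n) w)).hasFDerivAt.add_const c
  have hcomp : HasFDerivAt (fun z' => f (w ⬝ᵥ z' + c)) _ z := hf.hasDerivAt.comp_hasFDerivAt z hL
  rw [pd, hcomp.fderiv]
  simp

theorem pd_pd_comp_dotProduct_add {n : ℕ} {f : ℝ → ℝ} (w : Fin n → ℝ) (c : ℝ) (j l : Fin n)
    (z : Fin n → ℝ) (hf : Differentiable ℝ f) (hf' : DifferentiableAt ℝ (deriv f) (w ⬝ᵥ z + c)) :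
    pd j (pd l (fun z' => f (w ⬝ᵥ z' + c))) z = deriv (deriv f) (w ⬝ᵥ z + c) * w l * w j := by
  have hfirst : pd l (fun z' => f (w ⬝ᵥ z' + c)) = fun z' => deriv f (w ⬝ᵥ z' + c) * w l :=
    funext fun z' => pd_comp_dotProduct_add w c l z' (hf _)
  rw [hfirst, pd_comp_dotProduct_add w c j z (hf'.mul_const _), deriv_mul_const hf']

theorem mlp_layer_quadratic_form_general (n m r : ℕ) (σ : ℝ → ℝ) (hσ : ContDiff ℝ 2 σ)
    (W : Matrix (Fin m) (Fin n) ℝ) (b : Fin m → ℝ) (z : Fin n → ℝ)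
    (D : Matrix (Fin r) (Fin r) ℝ)
    (g : Fin n → Fin r → ℝ) (i : Fin m)
    (h : Fin r → ℝ)
    (hh : h = fun t => deriv σ (W.mulVec z i + b i) * ∑ j, W i j * g j t)
    (hσ' : deriv σ (W.mulVec z i + b i) ≠ 0) :
    ∑ j, ∑ l, pd j (pd l (fun z' => σ (W.mulVec z' i + b i))) z *
        (g j ⬝ᵥ D.mulVec (g l)) =
      (deriv (deriv σ) (W.mulVec z i + b i) / (deriv σ (W.mulVec z i + b i)) ^ 2) *
        (h ⬝ᵥ D.mulVec h) := by
  have hrow : ∀ z', (W *ᵥ z') i = W i ⬝ᵥ z' := fun _ => rfl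
  simp only [hrow] at hh hσ' ⊢
  set x := W i ⬝ᵥ z + b i
  have hσ_diff : Differentiable ℝ σ := hσ.differentiable (by norm_num)
  have hσ'_diff : Differentiable ℝ (deriv σ) :=
    ((contDiff_succ_iff_deriv (n := 1)).mp hσ).2.2.differentiable one_ne_zero
  have hh' : h = deriv σ x • ∑ j, W i j • g j := by
    rw [hh]; ext t; simp [Finset.sum_apply]
  calc ∑ j, ∑ l, pd j (pd l (fun z' => σ (W i ⬝ᵥ z' + b i))) z * (g j ⬝ᵥ D *ᵥ g l)
      = deriv (deriv σ) x * ∑ j, ∑ l, W i j * W i l * (g j ⬝ᵥ D *ᵥ g l) := by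
        simp only [Finset.mul_sum]
        refine Finset.sum_congr rfl fun j _ => Finset.sum_congr rfl fun l _ => ?_
        rw [pd_pd_comp_dotProduct_add (W i) (b i) j l z hσ_diff (hσ'_diff _)]
        ring
    _ = deriv (deriv σ) x / deriv σ x ^ 2 * (h ⬝ᵥ D *ᵥ h) := by
        rw [hh', mulVec_smul, smul_dotProduct, dotProduct_smul, dotProduct_mulVec_sum_smul,
          smul_eq_mul, smul_eq_mul]
        field_simp

/-- MLP-layer quadratic-form identity: with u_i(z) = σ((Wz+b)_i),
g_j ∈ ℝ^r given vectors, D diagonal, and h_i = σ'((Wz+b)_i) ∑_j W_{ij} g_j,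
one has ∑_{j,l} ∂²u_i/∂z_j∂z_l · g_jᵀ D g_l = (σ''/σ'²)((Wz+b)_i) · h_iᵀ D h_i,
provided σ'((Wz+b)_i) ≠ 0. -/
theorem mlp_layer_quadratic_form (n m r : ℕ) (σ : ℝ → ℝ) (hσ : ContDiff ℝ 2 σ)
    (W : Matrix (Fin m) (Fin n) ℝ) (b : Fin m → ℝ) (z : Fin n → ℝ)
    (D : Matrix (Fin r) (Fin r) ℝ) (hD : D.IsDiag)
    (g : Fin n → Fin r → ℝ) (i : Fin m)
    (h : Fin r → ℝ)
    (hh : h = fun t => deriv σ (W.mulVec z i + b i) * ∑ j, W i j * g j t)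
    (hσ' : deriv σ (W.mulVec z i + b i) ≠ 0) :
    ∑ j, ∑ l, pd j (pd l (fun z' => σ (W.mulVec z' i + b i))) z *
        (g j ⬝ᵥ D.mulVec (g l)) =
      (deriv (deriv σ) (W.mulVec z i + b i) / (deriv σ (W.mulVec z i + b i)) ^ 2) *
        (h ⬝ᵥ D.mulVec h) :=
  mlp_layer_quadratic_form_general n m r σ hσ W b z D g i h hh hσ'
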